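/- arXiv:2306.07211 — 6 statements merged into one kernel-verified Lean document; each statement's English description precedes it below -/
import Mathlib

section
/- Let n ≥ 2 be a natural number, let b > 0 and 0 ≤ c < 2 be real numbers, and let a : Fin n → ℝ. Then there is a unique family of retail prices p : Fin n → ℝ satisfying the first-order-condition system 2·b·p i = a i + (c·b/(n-1))·∑_{k ≠ i} p k for every i, and it is given by p i = ((n-1)·(2-c)·a i + c·∑_{k} a k) / (b·(2-c)·(2n-2+c)). -/
/-- In the decentralized model with `n ≥ 2` retailers, the first-order-condition
system `2·b·p i = a i + (c·b/(n-1))·∑_{k ≠ i} p k` has a unique solution, given by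
`p i = ((n-1)·(2-c)·a i + c·∑_k a k) / (b·(2-c)·(2n-2+c))`. -/
theorem stmt_0 (n : ℕ) (hn : 2 ≤ n) (b c : ℝ) (hb : 0 < b) (hc0 : 0 ≤ c) (hc2 : c < 2)
    (a : Fin n → ℝ) :
    ∀ p : Fin n → ℝ,
      (∀ i, 2 * b * p i = a i + c * b / ((n : ℝ) - 1) * ∑ k ∈ Finset.univ.erase i, p k) ↔
      (∀ i, p i = (((n : ℝ) - 1) * (2 - c) * a i + c * ∑ k, a k) /
        (b * (2 - c) * (2 * (n : ℝ) - 2 + c))) := by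
  intro p
  have hn2 : (2:ℝ) ≤ (n:ℝ) := by exact_mod_cast hn
  have hm0 : (0:ℝ) < (n:ℝ) - 1 := by linarith
  have hm : ((n:ℝ) - 1) ≠ 0 := ne_of_gt hm0
  have h2c : (0:ℝ) < 2 - c := by linarith
  have hd : (0:ℝ) < 2 * (n:ℝ) - 2 + c := by linarith
  have hD : b * (2 - c) * (2 * (n : ℝ) - 2 + c) ≠ 0 := by positivity
  have hbne : b ≠ 0 := ne_of_gt hb
  have h2cne : (2:ℝ) - c ≠ 0 := ne_of_gt h2c
  have hdne : 2 * (n:ℝ) - 2 + c ≠ 0 := ne_of_gt hd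
  have hsum : ∀ j : Fin n, ∑ k ∈ Finset.univ.erase j, p k = (∑ k, p k) - p j := by
    intro j; rw [Finset.sum_erase_eq_sub (Finset.mem_univ j)]
  constructor
  · intro hp
    set S := ∑ k, p k with hSdef
    set A := ∑ k, a k with hAdef
    have hp' : ∀ i, 2 * b * p i = a i + c * b / ((n:ℝ) - 1) * (S - p i) := by
      intro i; rw [hp i, hsum i]
    have hp'' : ∀ i, ((n:ℝ) - 1) * (2 * b * p i) = ((n:ℝ) - 1) * a i + c * b * (S - p i) := by
      intro i
      have := hp' i
      field_simp at this
      linarith [this]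
    have hsumS : b * (2 - c) * S = A := by
      have h1 : ∑ i, (((n:ℝ) - 1) * (2 * b * p i)) =
          ∑ i, (((n:ℝ) - 1) * a i + c * b * (S - p i)) :=
        Finset.sum_congr rfl (fun i _ => hp'' i)
      have h2 : ∑ i, (((n:ℝ) - 1) * (2 * b * p i)) = ((n:ℝ) - 1) * (2 * b * S) := by
        rw [hSdef, Finset.mul_sum, Finset.mul_sum]
      have h3 : ∑ i, (((n:ℝ) - 1) * a i + c * b * (S - p i)) =
          ((n:ℝ) - 1) * A + c * b * ((n:ℝ) * S - S) := by
        rw [Finset.sum_add_distrib, ← Finset.mul_sum, ← hAdef]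
        congr 1
        rw [← Finset.mul_sum, Finset.sum_sub_distrib, Finset.sum_const,
          Finset.card_univ, Fintype.card_fin, ← hSdef, nsmul_eq_mul]
      rw [h2, h3] at h1
      nlinarith [h1]
    intro i
    have key : p i * (b * (2 - c) * (2 * (n:ℝ) - 2 + c)) =
        ((n:ℝ) - 1) * (2 - c) * a i + c * A := by
      have h4 := hp'' i
      nlinarith [h4, hsumS]
    rw [eq_div_iff hD]
    exact key
  · intro hp i
    set A := ∑ k, a k with hAdef
    have hS : ∑ k, p k = ((((n:ℝ) - 1) * (2 - c) + (n:ℝ) * c) * A) /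
        (b * (2 - c) * (2 * (n : ℝ) - 2 + c)) := by
      rw [Finset.sum_congr rfl (fun k _ => hp k)]
      rw [← Finset.sum_div]
      congr 1
      rw [Finset.sum_add_distrib, ← Finset.mul_sum, Finset.sum_const,
        Finset.card_univ, Fintype.card_fin, nsmul_eq_mul, ← hAdef]
      ring
    rw [hsum i, hS, hp i]
    field_simp
    ring
end

section
/- Let n ≥ 2 be a natural number, let b > 0 and 0 ≤ c < 2 be real numbers, and let a, p : Fin n → ℝ. Define q i = a i - b·p i + (c·b/(n-1))·∑_{k ≠ i} p k. If p satisfies the first-order-condition system 2·b·p i = a i + (c·b/(n-1))·∑_{k ≠ i} p k for every i, then q i = b·p i for every i, and ∑_{i} q i = (∑_{i} a i)/(2-c). -/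
/-- At the solution of the first-order-condition system, each demand intensity
equals `b·p i`, and the aggregate demand intensity is `(∑ a i)/(2-c)`. -/
theorem stmt_3 (n : ℕ) (hn : 2 ≤ n) (b c : ℝ) (hb : 0 < b) (hc0 : 0 ≤ c) (hc2 : c < 2)
    (a p q : Fin n → ℝ)
    (hq : ∀ i, q i = a i - b * p i + c * b / ((n : ℝ) - 1) * ∑ k ∈ Finset.univ.erase i, p k)
    (hp : ∀ i, 2 * b * p i = a i + c * b / ((n : ℝ) - 1) * ∑ k ∈ Finset.univ.erase i, p k) :
    (∀ i, q i = b * p i) ∧ ∑ i, q i = (∑ i, a i) / (2 - c) := by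
  have hn1 : (1:ℝ) ≤ (n:ℝ) := by exact_mod_cast Nat.one_le_of_lt hn
  have hne : (n:ℝ) - 1 ≠ 0 := by
    have : (2:ℝ) ≤ (n:ℝ) := by exact_mod_cast hn
    linarith
  have hqb : ∀ i, q i = b * p i := by
    intro i
    have h1 := hq i
    have h2 := hp i
    linarith
  refine ⟨hqb, ?_⟩
  have hsq : ∑ i, q i = b * ∑ i, p i := by
    rw [Finset.mul_sum]; exact Finset.sum_congr rfl fun i _ => hqb i
  -- sum of erased sums
  have herase : ∀ i : Fin n, ∑ k ∈ Finset.univ.erase i, p k = (∑ k, p k) - p i := by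
    intro i
    rw [Finset.sum_erase_eq_sub (Finset.mem_univ i)]
  have hsumerase : ∑ i, ∑ k ∈ Finset.univ.erase i, p k = ((n:ℝ) - 1) * ∑ k, p k := by
    calc ∑ i : Fin n, ∑ k ∈ Finset.univ.erase i, p k
        = ∑ i : Fin n, ((∑ k, p k) - p i) := Finset.sum_congr rfl fun i _ => herase i
      _ = (n:ℝ) * (∑ k, p k) - ∑ i, p i := by
          rw [Finset.sum_sub_distrib, Finset.sum_const, Finset.card_univ, Fintype.card_fin,
            nsmul_eq_mul]
      _ = ((n:ℝ) - 1) * ∑ k, p k := by ring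
  have hsump : 2 * b * ∑ i, p i = (∑ i, a i) + c * b * ∑ i, p i := by
    have := Finset.sum_congr rfl fun i (_ : i ∈ Finset.univ) => hp i
    rw [Finset.sum_add_distrib, ← Finset.mul_sum, ← Finset.mul_sum, hsumerase] at this
    rw [this]
    field_simp
  have h2c : (2:ℝ) - c ≠ 0 := by linarith
  rw [hsq]
  field_simp
  linarith [hsump]
end

section
/- Let λ_r > 0, μ_r ≠ 0, D > 0, and M > 0 be real numbers. Define h : (-∞, 1) → ℝ by h(x) = -(λ_r·x/2)·(μ_r·D/(λ_r·(1-x)))² + M·μ_r·(μ_r·D/(λ_r·(1-x))). Then h attains its global maximum on (-∞,1) at the unique point x* = (2M - D)/(2M + D); that is, h(x) ≤ h(x*) for all x < 1, with equality exactly when x = x*. -/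
/-- The manufacturer's subsidy objective
`h(x) = -(λ_r·x/2)·(μ_r·D/(λ_r·(1-x)))² + M·μ_r·(μ_r·D/(λ_r·(1-x)))`
attains its global maximum on `(-∞,1)` at the unique point
`x* = (2M - D)/(2M + D)`. -/
theorem stmt_8 (lr mur D M : ℝ) (hlr : 0 < lr) (hmur : mur ≠ 0) (hD : 0 < D) (hM : 0 < M) :
    (2 * M - D) / (2 * M + D) < 1 ∧
    (∀ x : ℝ, x < 1 →
      -(lr * x / 2) * (mur * D / (lr * (1 - x))) ^ 2
        + M * mur * (mur * D / (lr * (1 - x))) ≤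
      -(lr * ((2 * M - D) / (2 * M + D)) / 2) *
          (mur * D / (lr * (1 - (2 * M - D) / (2 * M + D)))) ^ 2
        + M * mur * (mur * D / (lr * (1 - (2 * M - D) / (2 * M + D))))) ∧
    (∀ x : ℝ, x < 1 →
      ((-(lr * x / 2) * (mur * D / (lr * (1 - x))) ^ 2
          + M * mur * (mur * D / (lr * (1 - x))) =
        -(lr * ((2 * M - D) / (2 * M + D)) / 2) *
            (mur * D / (lr * (1 - (2 * M - D) / (2 * M + D)))) ^ 2
          + M * mur * (mur * D / (lr * (1 - (2 * M - D) / (2 * M + D))))) ↔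
        x = (2 * M - D) / (2 * M + D))) := by
  have hden : (0:ℝ) < 2 * M + D := by linarith
  have hden' : (2 * M + D) ≠ 0 := ne_of_gt hden
  have hstar : 1 - (2 * M - D) / (2 * M + D) = 2 * D / (2 * M + D) := by
    field_simp; ring
  have key : ∀ x : ℝ, x < 1 →
      -(lr * ((2 * M - D) / (2 * M + D)) / 2) *
          (mur * D / (lr * (1 - (2 * M - D) / (2 * M + D)))) ^ 2
        + M * mur * (mur * D / (lr * (1 - (2 * M - D) / (2 * M + D))))
      - (-(lr * x / 2) * (mur * D / (lr * (1 - x))) ^ 2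
        + M * mur * (mur * D / (lr * (1 - x))))
      = mur ^ 2 / (2 * lr) * (D / (1 - x) - (2 * M + D) / 2) ^ 2 := by
    intro x hx
    have h1 : (0:ℝ) < 1 - x := by linarith
    rw [hstar]
    field_simp
    ring
  refine ⟨?_, ?_, ?_⟩
  · rw [div_lt_one hden]; linarith
  · intro x hx
    have hk := key x hx
    have hnn : 0 ≤ mur ^ 2 / (2 * lr) * (D / (1 - x) - (2 * M + D) / 2) ^ 2 := by
      positivity
    linarith
  · intro x hx
    have hk := key x hx
    have h1 : (0:ℝ) < 1 - x := by linarith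
    constructor
    · intro heq
      have hz : mur ^ 2 / (2 * lr) * (D / (1 - x) - (2 * M + D) / 2) ^ 2 = 0 := by
        rw [← hk]; linarith
      have hpos : 0 < mur ^ 2 / (2 * lr) := by positivity
      have hsq : (D / (1 - x) - (2 * M + D) / 2) ^ 2 = 0 := by
        rcases mul_eq_zero.mp hz with h | h
        · exact absurd h (ne_of_gt hpos)
        · exact h
      have heq2 : D / (1 - x) = (2 * M + D) / 2 := by
        have := pow_eq_zero_iff (n := 2) (by norm_num) |>.mp hsq
        linarith
      have h2 : D * 2 = (2 * M + D) * (1 - x) :=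
        (div_eq_div_iff (ne_of_gt h1) (two_ne_zero)).mp heq2
      rw [eq_div_iff hden']
      linear_combination h2
    · intro hx'
      rw [hx']
end

section
/- Let λ_m > 0, μ_m ≠ 0, and let ρ, δ, p_c, θ, ω, S be real numbers. Define Δ = (4·p_c·θ·ω·μ_m·S - 4·λ_m·δ - 2·λ_m·ρ)² - 16·(μ_m·p_c·θ·ω·S)², assume Δ ≥ 0, and set A = (4·λ_m·δ + 2·λ_m·ρ - 4·p_c·θ·ω·μ_m·S - √Δ)/(8·μ_m²). Then λ_m·(ρ + δ) - p_c·θ·ω·μ_m·S - 2·A·μ_m² = (2·λ_m·ρ + √Δ)/4. Consequently, if 2·λ_m·ρ + √Δ > 0, then for any real numbers θ, p_i, q_i, the unique real number D satisfying ρ·D = θ·p_i·q_i + D·((p_c·θ·ω·μ_m·S + 2·A·μ_m²)/λ_m - δ) is D = 4·λ_m·θ·p_i·q_i/(2·λ_m·ρ + √Δ). -/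
/-! Substituting the minus-sign root `A` turns `2Aμ_m²` into a quarter of its numerator, so the
effective discount `λ_m(ρ+δ) - p_c θ ω μ_m S - 2Aμ_m²` collapses to `(2λ_m ρ + √Δ)/4`.
The coefficient equation is linear in `D` with exactly this coefficient (after
multiplying by `λ_m`), so it has a unique solution once the coefficient is nonzero. -/

theorem eq_add_mul_div_sub_iff {K : Type*} [Field K] {l r d c k x : K} (hl : l ≠ 0)
    (hcoeff : l * (r + d) - k ≠ 0) :
    r * x = c + x * (k / l - d) ↔ x = l * c / (l * (r + d) - k) := by
  rw [eq_div_iff hcoeff]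
  constructor
  · intro h
    field_simp at h
    linear_combination h
  · intro h
    field_simp
    linear_combination h

theorem stmt_13_general (lm mum rho del pc th om S Del A : ℝ) (hlm : 0 < lm) (hmum : mum ≠ 0)
    (hA : A = (4 * lm * del + 2 * lm * rho - 4 * pc * th * om * mum * S - Real.sqrt Del) /
      (8 * mum ^ 2)) :
    lm * (rho + del) - pc * th * om * mum * S - 2 * A * mum ^ 2 =
      (2 * lm * rho + Real.sqrt Del) / 4 ∧
    (0 < 2 * lm * rho + Real.sqrt Del →
      ∀ pi qi : ℝ, ∀ D : ℝ,
        (rho * D = th * pi * qi +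
          D * ((pc * th * om * mum * S + 2 * A * mum ^ 2) / lm - del)) ↔
        D = 4 * lm * th * pi * qi / (2 * lm * rho + Real.sqrt Del)) := by
  have hdiscount : lm * (rho + del) - pc * th * om * mum * S - 2 * A * mum ^ 2 =
      (2 * lm * rho + Real.sqrt Del) / 4 := by
    rw [hA]
    field_simp
    ring
  refine ⟨hdiscount, fun hpos pi qi D => ?_⟩
  have hcoeff : lm * (rho + del) - (pc * th * om * mum * S + 2 * A * mum ^ 2) =
      (2 * lm * rho + Real.sqrt Del) / 4 := by
    rw [← hdiscount]
    ring
  rw [eq_add_mul_div_sub_iff hlm.ne' (hcoeff ▸ by positivity), hcoeff]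
  field_simp

/-- In the decentralized model, with `A` the minus-sign root, one has
`λ_m(ρ+δ) - p_c θ ω μ_m S - 2Aμ_m² = (2λ_m ρ + √Δ)/4`; consequently the
coefficient equation for the retailer's value-function slope `D` has the
unique solution `D = 4λ_m θ p_i q_i/(2λ_m ρ + √Δ)`. -/
theorem stmt_13 (lm mum rho del pc th om S Del A : ℝ) (hlm : 0 < lm) (hmum : mum ≠ 0)
    (hDel : Del = (4 * pc * th * om * mum * S - 4 * lm * del - 2 * lm * rho) ^ 2
      - 16 * (mum * pc * th * om * S) ^ 2)
    (hDelpos : 0 ≤ Del)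
    (hA : A = (4 * lm * del + 2 * lm * rho - 4 * pc * th * om * mum * S - Real.sqrt Del) /
      (8 * mum ^ 2)) :
    lm * (rho + del) - pc * th * om * mum * S - 2 * A * mum ^ 2 =
      (2 * lm * rho + Real.sqrt Del) / 4 ∧
    (0 < 2 * lm * rho + Real.sqrt Del →
      ∀ pi qi : ℝ, ∀ D : ℝ,
        (rho * D = th * pi * qi +
          D * ((pc * th * om * mum * S + 2 * A * mum ^ 2) / lm - del)) ↔
        D = 4 * lm * th * pi * qi / (2 * lm * rho + Real.sqrt Del)) :=
  stmt_13_general lm mum rho del pc th om S Del A hlm hmum hA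
end

section
/- Let λ_m > 0, λ_r > 0, μ_m ≠ 0, and let ρ, δ, p, p_c, θ, ω, μ_r, S, T be real numbers. Define Δ = (4·p_c·θ·ω·μ_m·S - 4·λ_m·δ - 2·λ_m·ρ)² - 16·(μ_m·p_c·θ·ω·S)², assume Δ ≥ 0 and 2·λ_m·ρ + √Δ > 0, and set A = (4·λ_m·δ + 2·λ_m·ρ - 4·p_c·θ·ω·μ_m·S - √Δ)/(8·μ_m²). Then the unique real number B satisfying ρ·B = (p - p_c)·θ·S + (B·p_c·θ·ω·μ_m·S + 2·A·B·μ_m²)/λ_m + 2·A·μ_r²·T/λ_r - B·δ is B = 4·λ_m·(λ_r·(p - p_c)·θ·S + 2·A·μ_r²·T)/(λ_r·(2·λ_m·ρ + √Δ)). -/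
/-!
The HJB comparison of the coefficients of `G` is linear in `B`; collecting the `B`-terms,
its coefficient is `ρ + δ - (p_c θ ω μ_m S + 2 A μ_m²)/λ_m`. For the chosen root `A`, the
`p_c θ ω μ_m S` terms cancel and this coefficient collapses to `(2 λ_m ρ + √Δ)/(4 λ_m)`,
which is positive, so the equation has exactly one solution.
-/

lemma effective_discount_eq {lm mum rho del pc th om S s A : ℝ} (hlm : lm ≠ 0) (hmum : mum ≠ 0)
    (hA : A = (4 * lm * del + 2 * lm * rho - 4 * pc * th * om * mum * S - s) / (8 * mum ^ 2)) :
    rho + del - (pc * th * om * mum * S + 2 * A * mum ^ 2) / lm = (2 * lm * rho + s) / (4 * lm) := by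
  subst hA
  field_simp
  ring

theorem stmt_14_general (lm lr mum rho del p pc th om mur S T Del A : ℝ)
    (hlm : 0 < lm) (hlr : 0 < lr) (hmum : mum ≠ 0)
    (hpos : 0 < 2 * lm * rho + Real.sqrt Del)
    (hA : A = (4 * lm * del + 2 * lm * rho - 4 * pc * th * om * mum * S - Real.sqrt Del) /
      (8 * mum ^ 2)) :
    ∀ B : ℝ,
      (rho * B = (p - pc) * th * S + (B * pc * th * om * mum * S + 2 * A * B * mum ^ 2) / lm
        + 2 * A * mur ^ 2 * T / lr - B * del) ↔
      B = 4 * lm * (lr * (p - pc) * th * S + 2 * A * mur ^ 2 * T) /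
        (lr * (2 * lm * rho + Real.sqrt Del)) := by
  intro B
  have hcoeff := effective_discount_eq (S := S) hlm.ne' hmum hA
  have hsolution : 4 * lm * (lr * (p - pc) * th * S + 2 * A * mur ^ 2 * T) /
        (lr * (2 * lm * rho + Real.sqrt Del)) =
      ((p - pc) * th * S + 2 * A * mur ^ 2 * T / lr) / ((2 * lm * rho + Real.sqrt Del) / (4 * lm)) := by
    field_simp
  rw [hsolution, eq_div_iff (by positivity), ← hcoeff]
  constructor <;> intro h <;> linear_combination h

/-- In the decentralized model, the linear coefficient `B` of the manufacturer's
value function is uniquely determined: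
`B = 4λ_m(λ_r(p - p_c)θS + 2Aμ_r²T)/(λ_r(2λ_m ρ + √Δ))`. -/
theorem stmt_14 (lm lr mum rho del p pc th om mur S T Del A : ℝ)
    (hlm : 0 < lm) (hlr : 0 < lr) (hmum : mum ≠ 0)
    (hDel : Del = (4 * pc * th * om * mum * S - 4 * lm * del - 2 * lm * rho) ^ 2
      - 16 * (mum * pc * th * om * S) ^ 2)
    (hDelpos : 0 ≤ Del)
    (hpos : 0 < 2 * lm * rho + Real.sqrt Del)
    (hA : A = (4 * lm * del + 2 * lm * rho - 4 * pc * th * om * mum * S - Real.sqrt Del) /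
      (8 * mum ^ 2)) :
    ∀ B : ℝ,
      (rho * B = (p - pc) * th * S + (B * pc * th * om * mum * S + 2 * A * B * mum ^ 2) / lm
        + 2 * A * mur ^ 2 * T / lr - B * del) ↔
      B = 4 * lm * (lr * (p - pc) * th * S + 2 * A * mur ^ 2 * T) /
        (lr * (2 * lm * rho + Real.sqrt Del)) :=
  stmt_14_general lm lr mum rho del p pc th om mur S T Del A hlm hlr hmum hpos hA
end

section
/- Let λ_m > 0, λ_r > 0, let n be a natural number, and let ρ, δ, p_c, θ, ω, μ_m, μ_r, S be real numbers with λ_r·μ_m² + n·λ_m·μ_r² > 0. Define Δ = (4·λ_m·λ_r·δ + 2·λ_m·λ_r·ρ - 4·λ_r·μ_m·p_c·ω·θ·S)² - 16·λ_r·(λ_r·μ_m² + n·λ_m·μ_r²)·(p_c·θ·ω·S)², assume Δ ≥ 0, and set A = (4·δ·λ_m·λ_r + 2·λ_m·λ_r·ρ - 4·λ_r·μ_m·p_c·ω·θ·S - √Δ)/(8·(λ_r·μ_m² + n·λ_m·μ_r²)). Then λ_m·λ_r·(ρ + δ) - λ_r·p_c·θ·ω·μ_m·S - 2·A·(λ_r·μ_m²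 + n·λ_m·μ_r²) = (2·λ_m·λ_r·ρ + √Δ)/4. Consequently, if 2·λ_m·λ_r·ρ + √Δ > 0, then for any real numbers θ, p_i, q_i the unique real number D satisfying ρ·D = θ·p_i·q_i + D·((p_c·θ·ω·μ_m·S + 2·A·μ_m²)/λ_m + 2·n·A·μ_r²/λ_r - δ) is D = 4·λ_m·λ_r·θ·p_i·q_i/(2·λ_m·λ_r·ρ + √Δ). -/
/-! By the choice of the minus-sign root, `2A(λ_rμ_m² + nλ_mμ_r²)` equals
`(4δλ_mλ_r + 2λ_mλ_rρ - 4λ_rμ_m p_cωθS - √Δ)/4`, and substituting it cancels everything but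
`(2λ_mλ_rρ + √Δ)/4`. Multiplying the coefficient equation by `λ_mλ_r` shows that the bracket equals
`ρ` minus that same quantity divided by `λ_mλ_r`, so the equation for `D` collapses to
`D (2λ_mλ_rρ + √Δ) / (4λ_mλ_r) = θ p_i q_i`. -/

lemma sub_two_mul_minusRoot_mul_eq {L K c ρ δ s A : ℝ} (hc : c ≠ 0)
    (hA : A = (4 * δ * L + 2 * L * ρ - 4 * K - s) / (8 * c)) :
    L * (ρ + δ) - K - 2 * A * c = (2 * L * ρ + s) / 4 := by
  rw [hA]
  field_simp
  ring

lemma retailer_coeff_eq {lm lr n rho del pc th om mum mur S A : ℝ} (hlm : lm ≠ 0) (hlr : lr ≠ 0) :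
    (pc * th * om * mum * S + 2 * A * mum ^ 2) / lm + 2 * n * A * mur ^ 2 / lr - del =
      rho - (lm * lr * (rho + del) - lr * pc * th * om * mum * S -
        2 * A * (lr * mum ^ 2 + n * lm * mur ^ 2)) / (lm * lr) := by
  field_simp
  ring

lemma mul_eq_add_mul_sub_div_iff {ρ b g L D : ℝ} (hL : L ≠ 0) (hg : g ≠ 0) :
    ρ * D = b + D * (ρ - g / L) ↔ D = L * b / g := by
  rw [eq_div_iff hg]
  constructor <;> intro h
  · field_simp at h
    linear_combination h
  · field_simp
    linear_combination h

theorem stmt_19_general (lm lr : ℝ) (n : ℕ) (rho del pc th om mum mur S Del A : ℝ)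
    (hlm : 0 < lm) (hlr : 0 < lr)
    (hcoef : 0 < lr * mum ^ 2 + (n : ℝ) * lm * mur ^ 2)
    (hA : A = (4 * del * lm * lr + 2 * lm * lr * rho - 4 * lr * mum * pc * om * th * S -
      Real.sqrt Del) / (8 * (lr * mum ^ 2 + (n : ℝ) * lm * mur ^ 2))) :
    lm * lr * (rho + del) - lr * pc * th * om * mum * S -
      2 * A * (lr * mum ^ 2 + (n : ℝ) * lm * mur ^ 2) =
      (2 * lm * lr * rho + Real.sqrt Del) / 4 ∧
    (0 < 2 * lm * lr * rho + Real.sqrt Del →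
      ∀ pi qi : ℝ, ∀ D : ℝ,
        (rho * D = th * pi * qi +
          D * ((pc * th * om * mum * S + 2 * A * mum ^ 2) / lm
            + 2 * (n : ℝ) * A * mur ^ 2 / lr - del)) ↔
        D = 4 * lm * lr * th * pi * qi / (2 * lm * lr * rho + Real.sqrt Del)) := by
  have hgap : lm * lr * (rho + del) - lr * pc * th * om * mum * S -
      2 * A * (lr * mum ^ 2 + (n : ℝ) * lm * mur ^ 2) =
      (2 * lm * lr * rho + Real.sqrt Del) / 4 := by
    linear_combination sub_two_mul_minusRoot_mul_eq (L := lm * lr) (K := lr * mum * pc * om * th * S)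
      (ρ := rho) (δ := del) (s := Real.sqrt Del) (A := A) hcoef.ne' (by rw [hA]; ring)
  refine ⟨hgap, fun hpos pi qi D => ?_⟩
  rw [retailer_coeff_eq hlm.ne' hlr.ne', hgap,
    mul_eq_add_mul_sub_div_iff (mul_pos hlm hlr).ne' (by positivity)]
  field_simp

/-- In the Stackelberg model, with `A` the minus-sign root, one has
`λ_mλ_r(ρ+δ) - λ_r p_c θ ω μ_m S - 2A(λ_rμ_m² + nλ_mμ_r²) = (2λ_mλ_rρ + √Δ)/4`;
consequently the coefficient equation for the retailer's value-function slope
`D` has the unique solution `D = 4λ_mλ_r θ p_i q_i/(2λ_mλ_rρ + √Δ)`. -/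
theorem stmt_19 (lm lr : ℝ) (n : ℕ) (rho del pc th om mum mur S Del A : ℝ)
    (hlm : 0 < lm) (hlr : 0 < lr)
    (hcoef : 0 < lr * mum ^ 2 + (n : ℝ) * lm * mur ^ 2)
    (hDel : Del = (4 * lm * lr * del + 2 * lm * lr * rho - 4 * lr * mum * pc * om * th * S) ^ 2
      - 16 * lr * (lr * mum ^ 2 + (n : ℝ) * lm * mur ^ 2) * (pc * th * om * S) ^ 2)
    (hDelpos : 0 ≤ Del)
    (hA : A = (4 * del * lm * lr + 2 * lm * lr * rho - 4 * lr * mum * pc * om * th * S -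
      Real.sqrt Del) / (8 * (lr * mum ^ 2 + (n : ℝ) * lm * mur ^ 2))) :
    lm * lr * (rho + del) - lr * pc * th * om * mum * S -
      2 * A * (lr * mum ^ 2 + (n : ℝ) * lm * mur ^ 2) =
      (2 * lm * lr * rho + Real.sqrt Del) / 4 ∧
    (0 < 2 * lm * lr * rho + Real.sqrt Del →
      ∀ pi qi : ℝ, ∀ D : ℝ,
        (rho * D = th * pi * qi +
          D * ((pc * th * om * mum * S + 2 * A * mum ^ 2) / lm
            + 2 * (n : ℝ) * A * mur ^ 2 / lr - del)) ↔
        D = 4 * lm * lr * th * pi * qi / (2 * lm * lr * rho + Real.sqrt Del)) :=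
  stmt_19_general lm lr n rho del pc th om mum mur S Del A hlm hlr hcoef hA
end
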